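/- arXiv:1312.5722 — 8 statements merged into one kernel-verified Lean document; each statement's English description precedes it below -/
import Mathlib

section
/- Let α be a type and let w, z be elements of the free group FreeGroup α with w ≠ z. Then the set {s : FreeGroup α | s is a letter and s * w * s⁻¹ = z} has at most two elements; that is, there do not exist three pairwise distinct letters s, t, u with s * w * s⁻¹ = t * w * t⁻¹ = u * w * u⁻¹ = z. -/
/-!
Write a letter as `mk [σ]`. If `σ` does not cancel against the first letter of the reduced word
of `w`, the reduced word of `mk [σ] * w` is `σ` followed by that of `w`. Multiplying on the right by
the letter `σ⁻¹` either appends it or deletes the last letter, and deleting the leading `σ`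
would force `w = z = 1`. So `σ` is the first letter of `z`, or `σ⁻¹` is the first letter of `w`:
at most two letters conjugate `w` to `z`.
-/

/-- An element of the free group is a *letter* if it is a generator or the
inverse of a generator. -/
def IsLetter {α : Type*} (s : FreeGroup α) : Prop :=
  ∃ a : α, s = FreeGroup.of a ∨ s = (FreeGroup.of a)⁻¹

open FreeGroup in
theorem IsLetter.exists_eq_mk_singleton {α : Type*} {s : FreeGroup α} (hs : IsLetter s) :
    ∃ σ : α × Bool, s = mk [σ] := by
  obtain ⟨a, rfl | rfl⟩ := hs
  · exact ⟨(a, true), rfl⟩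
  · exact ⟨(a, false), by rw [of, inv_mk]; rfl⟩

namespace FreeGroup

variable {α : Type*}

theorem invRev_singleton (σ : α × Bool) : invRev [σ] = [(σ.1, !σ.2)] := rfl

theorem inv_mk_singleton (σ : α × Bool) : (mk [σ])⁻¹ = mk [(σ.1, !σ.2)] := by
  rw [inv_mk, invRev_singleton]

variable [DecidableEq α]

theorem toWord_mk_singleton_mul (σ : α × Bool) (x : FreeGroup α) :
    (mk [σ] * x).toWord = σ :: x.toWord ∨
      x.toWord = (σ.1, !σ.2) :: (mk [σ] * x).toWord := by
  have hred : IsReduced x.toWord := isReduced_toWord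
  generalize hL : x.toWord = L at hred
  obtain rfl : x = mk L := by rw [← hL, mk_toWord]
  rcases L with _ | ⟨a, X⟩
  · left
    rfl
  by_cases ha : a = (σ.1, !σ.2)
  · right
    subst ha
    have hcancel : mk [σ] * mk ((σ.1, !σ.2) :: X) = mk X := by
      rw [mul_mk]
      exact Quot.sound Red.Step.cons_not
    rw [hcancel, toWord_mk, (hred.infix (List.infix_cons (List.infix_refl X))).reduce_eq]
  · left
    rw [mul_mk, toWord_mk]
    refine IsReduced.reduce_eq (isReduced_cons_cons.mpr ⟨fun h1 => ?_, hred⟩)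
    by_contra h2
    exact ha (Prod.ext h1.symm (Bool.eq_not_iff.mpr (Ne.symm h2)))

theorem toWord_mul_mk_singleton (x : FreeGroup α) (τ : α × Bool) :
    (x * mk [τ]).toWord = x.toWord ++ [τ] ∨
      x.toWord = (x * mk [τ]).toWord ++ [(τ.1, !τ.2)] := by
  have h := toWord_mk_singleton_mul (τ.1, !τ.2) x⁻¹
  rw [← inv_mk_singleton, ← mul_inv_rev, toWord_inv, toWord_inv] at h
  have hτ : invRev [(τ.1, !τ.2)] = [τ] := by rw [invRev_singleton, Bool.not_not]
  rcases h with h | h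
  · left
    have := congrArg invRev h
    rwa [invRev_invRev, invRev_cons, invRev_invRev, hτ] at this
  · right
    have := congrArg invRev h
    rwa [invRev_invRev, invRev_cons, invRev_invRev, invRev_singleton, Bool.not_not] at this

theorem head?_toWord_of_conj {σ : α × Bool} {w z : FreeGroup α}
    (h : mk [σ] * w * (mk [σ])⁻¹ = z) (hwz : w ≠ z) :
    z.toWord.head? = some σ ∨ w.toWord.head? = some (σ.1, !σ.2) := by
  rw [inv_mk_singleton] at h
  subst h
  rcases toWord_mk_singleton_mul σ w with hsw | hw
  · left
    rcases toWord_mul_mk_singleton (mk [σ] * w) (σ.1, !σ.2) with hz | hz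
    · rw [hz, hsw]; rfl
    · rw [hsw] at hz
      by_cases hz1 : (mk [σ] * w * mk [(σ.1, !σ.2)]).toWord = []
      · rw [hz1, List.nil_append, List.cons_eq_cons, toWord_eq_nil_iff] at hz
        rw [toWord_eq_nil_iff] at hz1
        exact absurd (hz.2.trans hz1.symm) hwz
      · rw [← List.head?_append_of_ne_nil _ hz1, ← hz]
        rfl
  · right
    rw [hw]
    rfl

end FreeGroup

/-- For `w ≠ z` in a free group, the set of letters `s` with `s * w * s⁻¹ = z`
has at most two elements: there are no three pairwise distinct such letters. -/
theorem conjugation_at_most_two {α : Type*} (w z : FreeGroup α) (hwz : w ≠ z) :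
    {s : FreeGroup α | IsLetter s ∧ s * w * s⁻¹ = z}.encard ≤ 2 := by
  classical
  have hsub : {s : FreeGroup α | IsLetter s ∧ s * w * s⁻¹ = z} ⊆
      {FreeGroup.mk z.toWord.head?.toList, (FreeGroup.mk w.toWord.head?.toList)⁻¹} := by
    rintro s ⟨hs, hconj⟩
    obtain ⟨σ, rfl⟩ := IsLetter.exists_eq_mk_singleton hs
    rcases FreeGroup.head?_toWord_of_conj hconj hwz with hz | hw
    · left
      rw [hz]
      rfl
    · right
      rw [hw, Option.toList_some, FreeGroup.inv_mk_singleton, Bool.not_not]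
      rfl
  calc _ ≤ _ := Set.encard_mono hsub
    _ ≤ _ := Set.encard_insert_le _ _
    _ = 2 := by rw [Set.encard_singleton, one_add_one_eq_two]
end

section
/- Let α be a type and let w be an element of the free group FreeGroup α. Suppose s and t are letters of FreeGroup α such that the reduced word of s * w * s⁻¹ has length equal to the length of the reduced word of w plus 2 (i.e., no free cancellation occurs when conjugating w by s), and t * w * t⁻¹ = s * w * s⁻¹. Then t = s. -/
private lemma letter_mk {α : Type*} {s : FreeGroup α} (hs : IsLetter s) :
    ∃ p : α × Bool, s = FreeGroup.mk [p] ∧ s⁻¹ = FreeGroup.mk [(p.1, !p.2)] := by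
  obtain ⟨a, h | h⟩ := hs
  · refine ⟨(a, true), ?_, ?_⟩
    · rw [h]; rfl
    · rw [h, show FreeGroup.of a = FreeGroup.mk [(a,true)] from rfl, FreeGroup.inv_mk]; rfl
  · refine ⟨(a, false), ?_, ?_⟩
    · rw [h, show FreeGroup.of a = FreeGroup.mk [(a,true)] from rfl, FreeGroup.inv_mk]; rfl
    · rw [h, inv_inv, show FreeGroup.of a = FreeGroup.mk [(a,true)] from rfl]; rfl

/-- If no free cancellation occurs when conjugating `w` by the letter `s`
(i.e. the reduced word of `s * w * s⁻¹` is two longer than that of `w`), then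
`s` is the unique letter producing `s * w * s⁻¹` by a conjugation move. -/
theorem conjugation_no_cancellation_unique {α : Type*} [DecidableEq α]
    (w s t : FreeGroup α) (hs : IsLetter s) (ht : IsLetter t)
    (hlen : (s * w * s⁻¹).toWord.length = w.toWord.length + 2)
    (h : t * w * t⁻¹ = s * w * s⁻¹) : t = s := by
  obtain ⟨p, hp, hp'⟩ := letter_mk hs
  obtain ⟨q, hq, hq'⟩ := letter_mk ht
  set Lp : List (α × Bool) := [p] ++ w.toWord ++ [(p.1, !p.2)] with hLp
  set Lq : List (α × Bool) := [q] ++ w.toWord ++ [(q.1, !q.2)] with hLq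
  have hws : s * w * s⁻¹ = FreeGroup.mk Lp := by
    rw [hp', hp, ← FreeGroup.mk_toWord (x := w), FreeGroup.mul_mk, FreeGroup.mul_mk]
  have hwt : t * w * t⁻¹ = FreeGroup.mk Lq := by
    rw [hq', hq, ← FreeGroup.mk_toWord (x := w), FreeGroup.mul_mk, FreeGroup.mul_mk]
  have hLplen : Lp.length = w.toWord.length + 2 := by simp [hLp]
  have hLqlen : Lq.length = w.toWord.length + 2 := by simp [hLq]
  have hredp : FreeGroup.reduce Lp = Lp := by
    apply (FreeGroup.reduce.red (L := Lp)).sublist.eq_of_length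
    rw [← FreeGroup.toWord_mk, ← hws, hlen, hLplen]
  have hredq : FreeGroup.reduce Lq = Lq := by
    apply (FreeGroup.reduce.red (L := Lq)).sublist.eq_of_length
    rw [← FreeGroup.toWord_mk, ← hwt, h, hws, FreeGroup.toWord_mk, hredp, hLplen, hLqlen]
  have : Lq = Lp := by
    have := congrArg FreeGroup.toWord (hwt.symm.trans (h.trans hws))
    rwa [FreeGroup.toWord_mk, FreeGroup.toWord_mk, hredp, hredq] at this
  have hqp : q = p := by
    have := congrArg List.head? this
    simpa [hLp, hLq] using this
  rw [hq, hp, hqp]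
end

section
/- Let α be a type with decidable equality and let u, v, R : List (α × Bool) be words such that u ++ v is reduced and R is reduced. Set u' := FreeGroup.reduce (u ++ R). If u' ++ v is reduced (i.e., the left-insertion of R at position |v| into the word u ++ v is accepted, since no cancellation occurs to the right of the inserted word), then FreeGroup.reduce (u' ++ FreeGroup.invRev R) = u; consequently the left-insertion of the inverse word invRev R at the same position |v| into u' ++ v is accepted and returns the word u ++ v. -/
private theorem reduced_of_reduced_append_left {α : Type*} [DecidableEq α]
    {u v : List (α × Bool)} (h : FreeGroup.reduce (u ++ v) = u ++ v) :
    FreeGroup.reduce u = u := by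
  by_contra hne
  have hred : FreeGroup.Red u (FreeGroup.reduce u) := FreeGroup.reduce.red
  rcases Relation.ReflTransGen.cases_head hred with heq | ⟨w, hstep, _⟩
  · exact hne heq.symm
  · have hstep' : FreeGroup.Red.Step (u ++ v) (w ++ v) := hstep.append_right
    have h1 : FreeGroup.reduce (u ++ v) = FreeGroup.reduce (w ++ v) :=
      FreeGroup.reduce.Step.eq hstep'
    have h2 : (FreeGroup.reduce (w ++ v)).length ≤ (w ++ v).length :=
      FreeGroup.Red.length_le FreeGroup.reduce.red
    have h3 : (w ++ v).length + 2 = (u ++ v).length := hstep'.length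
    rw [← h1, h] at h2
    omega

/-- Reversibility of accepted left-insertions.  Suppose `u ++ v` and `R` are
reduced words, let `u' = reduce (u ++ R)`, and suppose the left-insertion of
`R` at position `|v|` is accepted, i.e. `u' ++ v` is reduced.  Then freely
reducing `u' ++ invRev R` gives back `u`; consequently the left-insertion of
`invRev R` at position `|v|` into `u' ++ v` is accepted and returns `u ++ v`. -/
theorem left_insertion_reversible {α : Type*} [DecidableEq α]
    (u v R : List (α × Bool))
    (huv : FreeGroup.reduce (u ++ v) = u ++ v)
    (hR : FreeGroup.reduce R = R)
    (hacc : FreeGroup.reduce (FreeGroup.reduce (u ++ R) ++ v) =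
      FreeGroup.reduce (u ++ R) ++ v) :
    FreeGroup.reduce (FreeGroup.reduce (u ++ R) ++ FreeGroup.invRev R) = u ∧
    FreeGroup.reduce
        (FreeGroup.reduce (FreeGroup.reduce (u ++ R) ++ FreeGroup.invRev R) ++ v) =
      u ++ v := by
  have hu : FreeGroup.reduce u = u := reduced_of_reduced_append_left huv
  have key : FreeGroup.reduce (FreeGroup.reduce (u ++ R) ++ FreeGroup.invRev R) = u := by
    have : FreeGroup.mk (FreeGroup.reduce (u ++ R) ++ FreeGroup.invRev R) =
        FreeGroup.mk u := by
      rw [← FreeGroup.mul_mk, FreeGroup.reduce.self, ← FreeGroup.mul_mk,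
        ← FreeGroup.inv_mk, mul_assoc, mul_inv_cancel, mul_one]
    have h := FreeGroup.reduce.sound this
    rw [h, hu]
  exact ⟨key, by rw [key, huv]⟩
end

section
/- Let α be a type and R ⊆ FreeGroup α a set of relators. Then every element w of the normal closure of R is reachable from the identity element 1 by a finite sequence of elementary moves; that is, Relation.ReflTransGen step_R 1 w holds for every w ∈ Subgroup.normalClosure R. -/
/-- The elementary-move relation: `z` is obtained from `w` either by a
conjugation move by a generator (or its inverse), or by appending a relator
or an inverse relator on the right. -/
def StepR {α : Type*} (R : Set (FreeGroup α)) (w z : FreeGroup α) : Prop :=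
  (∃ a : α, z = FreeGroup.of a * w * (FreeGroup.of a)⁻¹ ∨
    z = (FreeGroup.of a)⁻¹ * w * FreeGroup.of a) ∨
  (∃ t : FreeGroup α, (t ∈ R ∨ t⁻¹ ∈ R) ∧ z = w * t)

/-! The elements `y` such that every `x` can be moved to `x * y` form a normal subgroup
containing `R`: closure under products is transitivity, under inverses is symmetry of the
moves, and under conjugation holds because conjugation by any word is a sequence of
conjugation moves, so `x ↦ x * g * y * g⁻¹` factors as `x ↦ g⁻¹ * x * g ↦ g⁻¹ * x * g * y`
followed by conjugation back by `g`. Taking `x = 1` gives the theorem. -/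

namespace StepR

open Relation

variable {α : Type*} (R : Set (FreeGroup α))

instance : Std.Symm (StepR R) where
  symm := by
    rintro w z (⟨a, rfl | rfl⟩ | ⟨t, ht, rfl⟩)
    · exact Or.inl ⟨a, Or.inr (by group)⟩
    · exact Or.inl ⟨a, Or.inl (by group)⟩
    · exact Or.inr ⟨t⁻¹, by rwa [inv_inv, or_comm], by group⟩

theorem reflTransGen_conj (g w : FreeGroup α) : ReflTransGen (StepR R) w (g * w * g⁻¹) := by
  induction g using FreeGroup.induction_on generalizing w with
  | C1 => simpa using ReflTransGen.refl
  | of a => exact .single (Or.inl ⟨a, Or.inl rfl⟩)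
  | inv_of a _ => exact .single (Or.inl ⟨a, Or.inr (by group)⟩)
  | mul x y hx hy => simpa [mul_assoc] using (hy w).trans (hx _)

def rightMulReachable : Subgroup (FreeGroup α) where
  carrier := {y | ∀ x, ReflTransGen (StepR R) x (x * y)}
  one_mem' x := by simpa using ReflTransGen.refl
  mul_mem' hy hz x := by simpa [mul_assoc] using (hy x).trans (hz _)
  inv_mem' {y} hy x := by
    simpa using symm_of (ReflTransGen (StepR R)) (hy (x * y⁻¹))

instance : (rightMulReachable R).Normal where
  conj_mem _ hy g x := by
    have h := ((reflTransGen_conj R g⁻¹ x).trans (hy _)).trans (reflTransGen_conj R g _)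
    simpa [mul_assoc] using h

theorem subset_rightMulReachable : R ⊆ rightMulReachable R :=
  fun t ht _ => .single (Or.inr ⟨t, Or.inl ht, rfl⟩)

end StepR

/-- Every element of the normal closure of the relator set `R` is reachable
from the identity by a finite sequence of elementary moves. -/
theorem reachable_from_one {α : Type*} (R : Set (FreeGroup α)) :
    ∀ w ∈ Subgroup.normalClosure R, Relation.ReflTransGen (StepR R) 1 w := by
  intro w hw
  simpa using Subgroup.normalClosure_le_normal (StepR.subset_rightMulReachable R) hw 1
end

section
/- Let α be a type and R ⊆ FreeGroup α a set of relators with 1 ∉ R. Assume that either α has at least two distinct elements, or there exist r, s ∈ R with s ≠ r and s ≠ r⁻¹. Then any two nontrivial elements of the normal closure of R are connected by a finite sequence of elementary moves that never passes through the identity: for all u, v ∈ Subgroup.normalClosure R with u ≠ 1 and v ≠ 1, Relation.ReflTransGen step01_R u v holds. -/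
/-- The identity-avoiding elementary-move relation. -/
def Step01R {α : Type*} (R : Set (FreeGroup α)) (w z : FreeGroup α) : Prop :=
  z ≠ 1 ∧ StepR R w z

/-!
Conjugation by a generator is a move, so `w` is joined to every conjugate `g w g⁻¹`; and
conjugating by `g⁻¹`, appending a relator letter `t ∈ R ∪ R⁻¹` and conjugating back joins `w` to
`w (g t g⁻¹)` whenever that is not `1`. Moves can be reversed, so it suffices to join a fixed
relator letter to every nontrivial `u` in the normal closure: write `u` as a product of conjugates
of relator letters and multiply them in one at a time; when a partial product is `1`, jump from
the relator letter to the next factor instead. Two relator letters `s, t` with `s t ≠ 1` are joined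
through `s t` and `s t s⁻¹`. The remaining case `t = s⁻¹` is where the hypothesis enters: either a
second relator lies outside `{s, s⁻¹}` and serves as a stopover, or, with two generators, the
free group has trivial center and `s` is joined to some `g s⁻¹ g⁻¹ ≠ s⁻¹`, hence to `s⁻¹`.
-/

namespace FreeGroup

variable {α : Type*}

theorem center_eq_bot [Nontrivial α] : Subgroup.center (FreeGroup α) = ⊥ := by
  classical
  refine (Subgroup.eq_bot_iff_forall _).2 fun s hs => by_contra fun hs1 => ?_
  obtain ⟨x, w, hxw⟩ := List.exists_cons_of_ne_nil (mt toWord_eq_nil_iff.1 hs1)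
  -- a letter `y` that cancels against neither end of the reduced word of `s`
  obtain ⟨y, hyx, hyl⟩ :
      ∃ y : α × Bool, y.1 ≠ x.1 ∧ ∀ z ∈ s.toWord.getLast?, z.1 = y.1 → z.2 = y.2 := by
    obtain ⟨z, hz⟩ := Option.isSome_iff_exists.1 (s.toWord.getLast?_isSome.2 (by simp [hxw]))
    simp only [hz, Option.mem_def, Option.some.injEq, forall_eq']
    by_cases hzx : z.1 = x.1
    · obtain ⟨c, hc⟩ := exists_ne x.1
      exact ⟨(c, true), hc, fun h => absurd (hzx.symm.trans h) hc.symm⟩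
    · exact ⟨z, hzx, fun _ => rfl⟩
  have hy : (mk [y]).toWord = [y] := by rw [toWord_mk, IsReduced.singleton.reduce_eq]
  have hleft : (mk [y] * s).toWord = y :: s.toWord := by
    rw [toWord_mul, hy]
    refine IsReduced.reduce_eq (List.IsChain.append IsReduced.singleton isReduced_toWord ?_)
    simp [hxw, hyx]
  have hright : (s * mk [y]).toWord = s.toWord ++ [y] := by
    rw [toWord_mul, hy]
    exact IsReduced.reduce_eq
      (List.IsChain.append isReduced_toWord IsReduced.singleton (by simpa using hyl))
  have := congrArg (fun g => g.toWord.head?) (Subgroup.mem_center_iff.1 hs (mk [y]))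
  simp only [hleft, hright, hxw, List.head?_cons, List.cons_append, Option.some.injEq] at this
  exact hyx (congrArg Prod.fst this)

end FreeGroup

open scoped Pointwise

namespace Set

variable {G : Type*} {S : Set G} {x : G}

theorem inv_mem_union_inv [InvolutiveInv G] (h : x ∈ S ∪ S⁻¹) : x⁻¹ ∈ S ∪ S⁻¹ := by
  simpa [or_comm] using h

theorem ne_one_of_mem_union_inv [InvOneClass G] (h1 : (1 : G) ∉ S) (h : x ∈ S ∪ S⁻¹) :
    x ≠ 1 := by
  rintro rfl
  simp_all

end Set

open Set

section

variable {α : Type*} {R : Set (FreeGroup α)} {s t u v w : FreeGroup α}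

local notation:50 u " ⟶*[" R "] " v => Relation.ReflTransGen (Step01R R) u v

theorem StepR.symm (h : StepR R w v) : StepR R v w := by
  rcases h with ⟨a, rfl | rfl⟩ | ⟨t, ht, rfl⟩
  · exact Or.inl ⟨a, Or.inr (by group)⟩
  · exact Or.inl ⟨a, Or.inl (by group)⟩
  · exact Or.inr ⟨t⁻¹, inv_mem_union_inv ht, by group⟩

namespace Step01R

theorem ne_one_of_reflTransGen (h : u ⟶*[R] v) (hu : u ≠ 1) : v ≠ 1 := by
  induction h with
  | refl => exact hu
  | tail _ hvw _ => exact hvw.1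

theorem reflTransGen_symm (h : u ⟶*[R] v) (hu : u ≠ 1) : v ⟶*[R] u := by
  induction h with
  | refl => rfl
  | tail huv hvw ih => exact .head ⟨ne_one_of_reflTransGen huv hu, hvw.2.symm⟩ ih

theorem reflTransGen_conj (g : FreeGroup α) (hw : w ≠ 1) : w ⟶*[R] g * w * g⁻¹ := by
  induction g using FreeGroup.induction_on generalizing w with
  | C1 => simpa using .refl
  | of a => exact .single ⟨mt conj_eq_one_iff.1 hw, Or.inl ⟨a, Or.inl rfl⟩⟩
  | inv_of a _ => exact .single ⟨mt conj_eq_one_iff.1 hw, Or.inl ⟨a, Or.inr (by rw [inv_inv])⟩⟩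
  | mul x y ihx ihy =>
    simpa [mul_assoc] using (ihy hw).trans (ihx (mt conj_eq_one_iff.1 hw))

theorem reflTransGen_mul (ht : t ∈ R ∪ R⁻¹) (hwt : w * t ≠ 1) : w ⟶*[R] w * t :=
  .single ⟨hwt, Or.inr ⟨t, ht, rfl⟩⟩

theorem reflTransGen_mul_conj (g : FreeGroup α) (ht : t ∈ R ∪ R⁻¹) (hw : w ≠ 1)
    (hwt : w * (g * t * g⁻¹) ≠ 1) :
    w ⟶*[R] w * (g * t * g⁻¹) := by
  have hconj : w * (g * t * g⁻¹) = g * (g⁻¹ * w * g * t) * g⁻¹ := by group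
  have h1 : g⁻¹ * w * g * t ≠ 1 := by rwa [hconj, Ne, conj_eq_one_iff] at hwt
  calc w ⟶*[R] g⁻¹ * w * g⁻¹⁻¹ := reflTransGen_conj g⁻¹ hw
    _ = g⁻¹ * w * g := by rw [inv_inv]
    _ ⟶*[R] g⁻¹ * w * g * t := reflTransGen_mul ht h1
    _ ⟶*[R] g * (g⁻¹ * w * g * t) * g⁻¹ := reflTransGen_conj g h1
    _ = w * (g * t * g⁻¹) := hconj.symm

theorem reflTransGen_conj_of_mul_ne_one (h1R : (1 : FreeGroup α) ∉ R) (g : FreeGroup α)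
    (hs : s ∈ R ∪ R⁻¹) (ht : t ∈ R ∪ R⁻¹) (hst : s * (g * t * g⁻¹) ≠ 1) :
    s ⟶*[R] g * t * g⁻¹ := by
  have hc : s * (g * t * g⁻¹) * s⁻¹ ≠ 1 :=
    mt conj_eq_one_iff.1 (mt conj_eq_one_iff.1 (ne_one_of_mem_union_inv h1R ht))
  calc s ⟶*[R] s * (g * t * g⁻¹) :=
        reflTransGen_mul_conj g ht (ne_one_of_mem_union_inv h1R hs) hst
    _ ⟶*[R] s * (g * t * g⁻¹) * s⁻¹ := reflTransGen_mul (inv_mem_union_inv hs) hc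
    _ ⟶*[R] s⁻¹ * (s * (g * t * g⁻¹) * s⁻¹) * s⁻¹⁻¹ := reflTransGen_conj s⁻¹ hc
    _ = g * t * g⁻¹ := by group

theorem reflTransGen_of_mul_ne_one (h1R : (1 : FreeGroup α) ∉ R) (hs : s ∈ R ∪ R⁻¹)
    (ht : t ∈ R ∪ R⁻¹) (hst : s * t ≠ 1) : s ⟶*[R] t := by
  simpa using reflTransGen_conj_of_mul_ne_one h1R 1 hs ht (by simpa using hst)

theorem reflTransGen_inv_of_nontrivial [Nontrivial α] (h1R : (1 : FreeGroup α) ∉ R)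
    (hs : s ∈ R ∪ R⁻¹) : s ⟶*[R] s⁻¹ := by
  have hs1 := ne_one_of_mem_union_inv h1R hs
  obtain ⟨g, hg⟩ : ∃ g, g * s ≠ s * g := by
    have : s ∉ Subgroup.center (FreeGroup α) := by simpa [FreeGroup.center_eq_bot] using hs1
    simpa [Subgroup.mem_center_iff] using this
  have hsg : s * (g * s⁻¹ * g⁻¹) ≠ 1 := by
    rw [show s * (g * s⁻¹ * g⁻¹) = s * g * (g * s)⁻¹ by group, Ne, mul_inv_eq_one]
    exact hg.symm
  calc s ⟶*[R] g * s⁻¹ * g⁻¹ :=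
        reflTransGen_conj_of_mul_ne_one h1R g hs (inv_mem_union_inv hs) hsg
    _ ⟶*[R] g⁻¹ * (g * s⁻¹ * g⁻¹) * g⁻¹⁻¹ :=
        reflTransGen_conj g⁻¹ (mt conj_eq_one_iff.1 (inv_ne_one.2 hs1))
    _ = s⁻¹ := by group

theorem reflTransGen_inv_of_ne_of_ne_inv (h1R : (1 : FreeGroup α) ∉ R) {r r' : FreeGroup α}
    (hr : r ∈ R) (hr' : r' ∈ R) (hne : r' ≠ r) (hne' : r' ≠ r⁻¹) (hs : s ∈ R ∪ R⁻¹) :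
    s ⟶*[R] s⁻¹ := by
  obtain ⟨t, ht, hts, hts'⟩ : ∃ t ∈ R, t ≠ s ∧ t ≠ s⁻¹ := by
    by_cases h : r ≠ s ∧ r ≠ s⁻¹
    · exact ⟨r, hr, h⟩
    · refine ⟨r', hr', ?_⟩
      grind [inv_inv]
  calc s ⟶*[R] t :=
        reflTransGen_of_mul_ne_one h1R hs (Or.inl ht) (mt eq_inv_of_mul_eq_one_right hts')
    _ ⟶*[R] s⁻¹ :=
        reflTransGen_of_mul_ne_one h1R (Or.inl ht) (inv_mem_union_inv hs)
          (by rwa [Ne, mul_inv_eq_one])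

theorem reflTransGen_of_mem (h1R : (1 : FreeGroup α) ∉ R)
    (hyp : (∃ a b : α, a ≠ b) ∨ (∃ r ∈ R, ∃ r' ∈ R, r' ≠ r ∧ r' ≠ r⁻¹))
    (hs : s ∈ R ∪ R⁻¹) (ht : t ∈ R ∪ R⁻¹) : s ⟶*[R] t := by
  by_cases hst : s * t = 1
  · rw [eq_inv_of_mul_eq_one_right hst]
    rcases hyp with ⟨a, b, hab⟩ | ⟨r, hr, r', hr', hne, hne'⟩
    · have : Nontrivial α := ⟨⟨a, b, hab⟩⟩
      exact reflTransGen_inv_of_nontrivial h1R hs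
    · exact reflTransGen_inv_of_ne_of_ne_inv h1R hr hr' hne hne' hs
  · exact reflTransGen_of_mul_ne_one h1R hs ht hst

theorem reflTransGen_of_mem_normalClosure (h1R : (1 : FreeGroup α) ∉ R)
    (hyp : (∃ a b : α, a ≠ b) ∨ (∃ r ∈ R, ∃ r' ∈ R, r' ≠ r ∧ r' ≠ r⁻¹))
    (ht : t ∈ R ∪ R⁻¹) (hu : u ∈ Subgroup.normalClosure R) (hu1 : u ≠ 1) : t ⟶*[R] u := by
  have step : ∀ x g s, (x ≠ 1 → t ⟶*[R] x) → s ∈ R ∪ R⁻¹ → x * (g * s * g⁻¹) ≠ 1 →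
      t ⟶*[R] x * (g * s * g⁻¹) := by
    intro x g s ih hs hxs
    by_cases hx : x = 1
    · subst hx
      rw [one_mul] at hxs ⊢
      exact (reflTransGen_of_mem h1R hyp ht hs).trans
        (reflTransGen_conj g (ne_one_of_mem_union_inv h1R hs))
    · exact (ih hx).trans (reflTransGen_mul_conj g hs hx hxs)
  induction hu using Subgroup.closure_induction_right with
  | one => exact absurd rfl hu1
  | mul_right x _ y hy ih =>
    obtain ⟨r, hr, hry⟩ := Group.mem_conjugatesOfSet_iff.1 hy
    obtain ⟨g, rfl⟩ := isConj_iff.1 hry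
    exact step x g r ih (Or.inl hr) hu1
  | mul_inv_cancel x _ y hy ih =>
    obtain ⟨r, hr, hry⟩ := Group.mem_conjugatesOfSet_iff.1 hy
    obtain ⟨g, rfl⟩ := isConj_iff.1 hry
    rw [show (g * r * g⁻¹)⁻¹ = g * r⁻¹ * g⁻¹ by group] at hu1 ⊢
    exact step x g r⁻¹ ih (inv_mem_union_inv (Or.inl hr)) hu1

end Step01R

end

/-- If `1 ∉ R` and either there are at least two generators or `R` contains
two essentially different relators, then any two nontrivial elements of the
normal closure of `R` are connected by a finite sequence of elementary moves
avoiding the identity. -/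
theorem irreducible_avoiding_identity {α : Type*} (R : Set (FreeGroup α))
    (h1R : (1 : FreeGroup α) ∉ R)
    (hyp : (∃ a b : α, a ≠ b) ∨ (∃ r ∈ R, ∃ s ∈ R, s ≠ r ∧ s ≠ r⁻¹)) :
    ∀ u ∈ Subgroup.normalClosure R, ∀ v ∈ Subgroup.normalClosure R,
      u ≠ 1 → v ≠ 1 → Relation.ReflTransGen (Step01R R) u v := by
  intro u hu v hv hu1 hv1
  obtain ⟨r, hr⟩ : R.Nonempty :=
    Set.nonempty_iff_ne_empty.2 fun hR => hu1 (by simpa [hR] using hu)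
  have hr' : r ∈ R ∪ R⁻¹ := Or.inl hr
  have hru := Step01R.reflTransGen_of_mem_normalClosure h1R hyp hr' hu hu1
  have hrv := Step01R.reflTransGen_of_mem_normalClosure h1R hyp hr' hv hv1
  exact (Step01R.reflTransGen_symm hru (ne_one_of_mem_union_inv h1R hr')).trans hrv
end

section
/- Work in the free group on one generator, FreeGroup PUnit, and write x = FreeGroup.of PUnit.unit. Let k ≥ 1 be a natural number and let R = {x^k}. Then it is not possible to transform x^k into (x^k)⁻¹ by a finite sequence of elementary moves avoiding the identity: ¬ Relation.ReflTransGen step01_R (x^k) ((x^k)⁻¹). -/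
local notation "xx" => FreeGroup.of PUnit.unit

private def φ : FreeGroup PUnit →* Multiplicative ℤ :=
  FreeGroup.lift (fun _ => Multiplicative.ofAdd (1:ℤ))

private lemma phi_x_zpow (n : ℤ) : φ (xx ^ n) = Multiplicative.ofAdd n := by
  rw [map_zpow]
  simp [φ, ← ofAdd_zsmul]

private lemma x_zpow_inj {n m : ℤ} (h : (xx : FreeGroup PUnit) ^ n = xx ^ m) : n = m := by
  have := congrArg φ h
  rw [phi_x_zpow, phi_x_zpow] at this
  exact Multiplicative.ofAdd.injective this

/-- In the one-generator presentation `⟨a | a^k⟩`, the relator `a^k` cannot be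
transformed into `a^{-k}` by elementary moves avoiding the identity. -/
theorem one_generator_not_reachable (k : ℕ) (hk : 1 ≤ k) :
    ¬ Relation.ReflTransGen
        (Step01R ({(FreeGroup.of PUnit.unit) ^ k} : Set (FreeGroup PUnit)))
        ((FreeGroup.of PUnit.unit) ^ k) (((FreeGroup.of PUnit.unit) ^ k)⁻¹) := by
  intro h
  have key : ∀ z, Relation.ReflTransGen
      (Step01R ({xx ^ k} : Set (FreeGroup PUnit))) (xx ^ k) z →
      ∃ n : ℤ, z = xx ^ n ∧ (k : ℤ) ∣ n ∧ 0 < n := by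
    intro z hz
    induction hz with
    | refl =>
      exact ⟨(k : ℤ), by rw [zpow_natCast], dvd_refl _, by exact_mod_cast hk⟩
    | tail hab hstep ih =>
      obtain ⟨n, rfl, hdvd, hpos⟩ := ih
      obtain ⟨hne, hs⟩ := hstep
      rcases hs with ⟨a, ha | ha⟩ | ⟨t, ht, rfl⟩
      · -- conjugation by of a = xx (a : PUnit)
        refine ⟨n, ?_, hdvd, hpos⟩
        have : FreeGroup.of a = xx := by cases a; rfl
        rw [ha, this]
        group
      · refine ⟨n, ?_, hdvd, hpos⟩
        have : FreeGroup.of a = xx := by cases a; rfl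
        rw [ha, this]
        group
      · rcases ht with ht | ht
        · -- t = xx ^ k
          have ht' : t = xx ^ (k : ℤ) := by
            rw [Set.mem_singleton_iff] at ht; rw [ht, zpow_natCast]
          refine ⟨n + k, by rw [ht', zpow_add], dvd_add hdvd (dvd_refl _), ?_⟩
          positivity
        · -- t⁻¹ = xx ^ k, so t = xx ^ (-k)
          have ht' : t = xx ^ (-(k : ℤ)) := by
            rw [Set.mem_singleton_iff] at ht
            rw [zpow_neg, zpow_natCast, ← ht, inv_inv]
          have hz' : xx ^ n * t = xx ^ (n - (k : ℤ)) := by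
            rw [ht', ← zpow_add]; ring_nf
          have hdvd' : (k : ℤ) ∣ n - k := dvd_sub hdvd (dvd_refl _)
          have hne0 : n - (k : ℤ) ≠ 0 := by
            intro h0
            apply hne
            rw [hz', h0, zpow_zero]
          have hge : 0 ≤ n - (k : ℤ) := by
            rcases hdvd with ⟨c, rfl⟩
            have hk' : (0:ℤ) < k := by exact_mod_cast hk
            have hc : 0 < c := by nlinarith
            nlinarith
          exact ⟨n - k, hz', hdvd', lt_of_le_of_ne hge (Ne.symm hne0)⟩
  obtain ⟨n, hn, _, hpos⟩ := key _ h
  have : (xx : FreeGroup PUnit) ^ (-(k:ℤ)) = xx ^ n := by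
    rw [← hn, zpow_neg, zpow_natCast]
  have := x_zpow_inj this
  omega
end

section
/- Let α be a type containing two distinct elements a ≠ b, let k ≥ 1 be a natural number, and let R = {(FreeGroup.of a)^k} ⊆ FreeGroup α. Then (FreeGroup.of a)^k can be transformed into ((FreeGroup.of a)^k)⁻¹ by a finite sequence of elementary moves avoiding the identity: Relation.ReflTransGen step01_R ((FreeGroup.of a)^k) (((FreeGroup.of a)^k)⁻¹) holds. -/
private lemma addRight_pow_apply (k : ℕ) (n : ℤ) :
    ((Equiv.addRight (1 : ℤ)) ^ k) n = n + k := by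
  induction k with
  | zero => simp
  | succ k ih =>
    rw [pow_succ']
    simp only [Equiv.Perm.mul_apply, Equiv.coe_addRight, ih]
    push_cast; ring

private lemma conj_ne_one {G : Type*} [Group G] {w : G} (h : w ≠ 1) (u : G) :
    u * w * u⁻¹ ≠ 1 := by
  intro hh
  apply h
  have : w = u⁻¹ * (u * w * u⁻¹) * u := by group
  rw [this, hh]; group

private lemma conj_chain {α : Type*} (R : Set (FreeGroup α)) (g : α)
    (c : FreeGroup α) (hc : c ≠ 1) :
    ∀ m : ℕ, Relation.ReflTransGen (Step01R R)
      ((FreeGroup.of g) ^ m * c * ((FreeGroup.of g) ^ m)⁻¹) c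
  | 0 => by simpa using Relation.ReflTransGen.refl
  | (m + 1) => by
    refine Relation.ReflTransGen.head ?_ (conj_chain R g c hc m)
    refine ⟨conj_ne_one hc _, Or.inl ⟨g, Or.inr ?_⟩⟩
    rw [pow_succ]
    group

/-- With at least two generators, the relator `a^k` can be transformed into
`a^{-k}` by a finite sequence of elementary moves avoiding the identity. -/
theorem two_generators_reachable {α : Type*} (a b : α) (hab : a ≠ b)
    (k : ℕ) (hk : 1 ≤ k) :
    Relation.ReflTransGen
      (Step01R ({(FreeGroup.of a) ^ k} : Set (FreeGroup α)))
      ((FreeGroup.of a) ^ k) (((FreeGroup.of a) ^ k)⁻¹) := by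
  classical
  set A : FreeGroup α := (FreeGroup.of a) ^ k with hAdef
  set B : FreeGroup α := FreeGroup.of b with hBdef
  set R : Set (FreeGroup α) := {A} with hRdef
  -- homomorphism to permutations of ℤ
  set x : Equiv.Perm ℤ := Equiv.addRight (1 : ℤ) with hxdef
  set y : Equiv.Perm ℤ := Equiv.neg ℤ with hydef
  set f : FreeGroup α →* Equiv.Perm ℤ :=
    FreeGroup.lift (fun c => if c = a then x else y) with hfdef
  have hfa : f (FreeGroup.of a) = x := by simp [hfdef]
  have hfb : f B = y := by simp [hfdef, hBdef, hab.symm]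
  have hfA : f A = x ^ k := by rw [hAdef, map_pow, hfa]
  have hk0 : (k : ℤ) ≠ 0 := by exact_mod_cast Nat.one_le_iff_ne_zero.mp hk
  have hA : A ≠ 1 := by
    intro h
    have h0 : (x ^ k) 0 = 0 := by rw [← hfA, h, map_one]; rfl
    rw [hxdef, addRight_pow_apply] at h0
    simp at h0
    omega
  have hw4 : B⁻¹ * A⁻¹ * B * A ≠ 1 := by
    intro h
    have h2 : y⁻¹ * (x ^ k)⁻¹ * y * x ^ k = 1 := by
      have := congrArg f h
      simpa [map_mul, map_inv, hfA, hfb] using this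
    have h3 : (x ^ k * y)⁻¹ * (y * x ^ k) = 1 := by
      rw [mul_inv_rev]
      simpa [mul_assoc] using h2
    have hc : x ^ k * y = y * x ^ k := inv_mul_eq_one.mp h3
    have := congrArg (fun p : Equiv.Perm ℤ => p 0) hc
    simp only [Equiv.Perm.mul_apply] at this
    rw [hydef, hxdef] at this
    simp only [Equiv.neg_apply, addRight_pow_apply] at this
    simp at this
    omega
  have hAinv : A⁻¹ ≠ 1 := inv_ne_one.mpr hA
  -- membership fact for insertions of A⁻¹
  have hmem : (A⁻¹ : FreeGroup α) ∈ R ∨ (A⁻¹ : FreeGroup α)⁻¹ ∈ R := by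
    right; simp [hRdef]
  -- step 1 : A → B * A * B⁻¹
  have s1 : Step01R R A (B * A * B⁻¹) :=
    ⟨conj_ne_one hA B, Or.inl ⟨b, Or.inl rfl⟩⟩
  -- step 2 : B*A*B⁻¹ → B*A*B⁻¹*A⁻¹
  have s2 : Step01R R (B * A * B⁻¹) (B * A * B⁻¹ * A⁻¹) := by
    refine ⟨?_, Or.inr ⟨A⁻¹, hmem, rfl⟩⟩
    have e : B * A * B⁻¹ * A⁻¹ = (B * A) * (B⁻¹ * A⁻¹ * B * A) * (B * A)⁻¹ := by
      group
    rw [e]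
    exact conj_ne_one hw4 _
  -- step 3 : B*A*B⁻¹*A⁻¹ → A*B⁻¹*A⁻¹*B   (conjugation z = B⁻¹ * w * B)
  have s3 : Step01R R (B * A * B⁻¹ * A⁻¹) (A * B⁻¹ * A⁻¹ * B) := by
    refine ⟨?_, Or.inl ⟨b, Or.inr ?_⟩⟩
    · have e : A * B⁻¹ * A⁻¹ * B = A * (B⁻¹ * A⁻¹ * B * A) * A⁻¹ := by group
      rw [e]
      exact conj_ne_one hw4 _
    · rw [hBdef]; group
  -- chain : A*B⁻¹*A⁻¹*B → B⁻¹*A⁻¹*B*A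
  have chain : Relation.ReflTransGen (Step01R R)
      (A * B⁻¹ * A⁻¹ * B) (B⁻¹ * A⁻¹ * B * A) := by
    have e : A * B⁻¹ * A⁻¹ * B =
        (FreeGroup.of a) ^ k * (B⁻¹ * A⁻¹ * B * A) * ((FreeGroup.of a) ^ k)⁻¹ := by
      rw [← hAdef]; group
    rw [e]
    exact conj_chain R a _ hw4 k
  -- step 5 : B⁻¹*A⁻¹*B*A → B⁻¹*A⁻¹*B
  have s5 : Step01R R (B⁻¹ * A⁻¹ * B * A) (B⁻¹ * A⁻¹ * B) := by
    refine ⟨?_, Or.inr ⟨A⁻¹, hmem, by group⟩⟩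
    have e : B⁻¹ * A⁻¹ * B = B⁻¹ * A⁻¹ * (B⁻¹)⁻¹ := by rw [inv_inv]
    rw [e]
    exact conj_ne_one hAinv _
  -- step 6 : B⁻¹*A⁻¹*B → A⁻¹
  have s6 : Step01R R (B⁻¹ * A⁻¹ * B) A⁻¹ := by
    refine ⟨hAinv, Or.inl ⟨b, Or.inl ?_⟩⟩
    rw [hBdef]; group
  exact Relation.ReflTransGen.trans (.single s1) (.trans (.single s2)
    (.trans (.single s3) (.trans chain (.trans (.single s5) (.single s6)))))
end

section
/- Let α be a type and let r : List (α × Bool) be a nonempty word such that every cyclic rotation of r equals r or equals the formal inverse word of r (for every natural number i, r.rotate i = r or r.rotate i = FreeGroup.invRev r). Then r is a power of a single letter: there exists x : α × Bool such that r = List.replicate r.length x. -/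
/-- If every cyclic rotation of a nonempty word `r` equals `r` or its formal
inverse word, then `r` is a power of a single letter. -/
theorem rotations_imply_power_of_letter {α : Type*} (r : List (α × Bool))
    (hne : r ≠ [])
    (h : ∀ i : ℕ, r.rotate i = r ∨ r.rotate i = FreeGroup.invRev r) :
    ∃ x : α × Bool, r = List.replicate r.length x := by
  have hlen : 0 < r.length := List.length_pos_iff.mpr hne
  have : Nonempty (α × Bool) := ⟨r[0]⟩
  rcases h 1 with h1 | h1
  · exact List.rotate_one_eq_self_iff_eq_replicate.mp h1
  · exfalso
    have hlt : r.length - 1 < (r.rotate 1).length := by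
      rw [List.length_rotate]; omega
    have hA : (r.rotate 1)[r.length - 1]'hlt = r[0] := by
      rw [List.getElem_rotate]
      simp [Nat.sub_add_cancel hlen, Nat.mod_self]
    have hB : (FreeGroup.invRev r)[r.length - 1]'(by
        rw [FreeGroup.invRev_length]; omega) = (r[0].1, !r[0].2) := by
      simp [FreeGroup.invRev, Nat.sub_self]
    have hC := (List.getElem_of_eq h1 hlt).trans hB
    have := congrArg Prod.snd (hA.symm.trans hC)
    simp at this
end
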